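/- For t ∈ ℂ define f_t : ℂ² → ℂ by f_t(x, y) = x⁴ + y⁵ + t·x²y². Then for every t_0 ∈ ℂ with t_0 ≠ 0 there is a neighbourhood T ⊆ ℂ \ {0} of t_0 such that for all t ∈ T the germs at 0 of f_t and f_{t_0} are bi-Lipschitz right equivalent: there exist r > 0, L ≥ 1 and a map φ : B(0,r) → ℂ² with φ(0) = 0 such that (1/L)·‖x − y‖ ≤ ‖φ(x) − φ(y)‖ ≤ L·‖x − y‖ for all x, y ∈ B(0,r) and f_t(φ(x)) = f_{t_0}(x) for all x ∈ B(0,r). -/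

import Mathlib

/-!
Kuo's vector-field method. Write `∂ₓf_s = 2x·d₁` and `∂_y f_s = y·d₂`, and move the parameter
along `s(τ) = t₀ + τ(t - t₀)`. The field `V = -(t - t₀)·(x y² d̄₁, x² y d̄₂) / (2|d₁|² + |d₂|²)`
satisfies `∂_s f_s + ∂f_s · V = 0`, so `f_{s(τ)}` is constant along its trajectories and the
time-one map `φ` of its flow satisfies `f_t ∘ φ = f_{t₀}`. Near the origin the denominator is at
least a multiple of `‖v‖⁴` (this needs `s ≠ 0`) while the numerator vanishes to order five, so `V`
is Lipschitz with constant `O(|t - t₀|)`; Grönwall's inequality, run forwards and backwards in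
time, makes `φ` bi-Lipschitz.
-/

open Metric Set
open scoped NNReal ComplexConjugate

section Flow

variable {E : Type*} [NormedAddCommGroup E] [NormedSpace ℝ E]

noncomputable def radialRetraction (R : ℝ) (x : E) : E := min 1 (R / ‖x‖) • x

variable {R : ℝ}

theorem norm_radialRetraction (hR : 0 ≤ R) (x : E) : ‖radialRetraction R x‖ = min ‖x‖ R := by
  rcases eq_or_ne x 0 with rfl | hx
  · simp [radialRetraction, hR]
  have hx' : 0 < ‖x‖ := norm_pos_iff.2 hx
  rw [radialRetraction, norm_smul, Real.norm_of_nonneg (by positivity),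
    min_mul_of_nonneg _ _ hx'.le, one_mul, div_mul_cancel₀ _ hx'.ne']

theorem radialRetraction_of_norm_le {x : E} (hx : ‖x‖ ≤ R) : radialRetraction R x = x := by
  rcases eq_or_ne x 0 with rfl | hx0
  · simp [radialRetraction]
  rw [radialRetraction, min_eq_left ((one_le_div (norm_pos_iff.2 hx0)).2 hx), one_smul]

theorem abs_min_one_div_sub_mul_le {a b : ℝ} (hR : 0 ≤ R) (hb : 0 ≤ b) (hba : b ≤ a) :
    |min 1 (R / a) - min 1 (R / b)| * b ≤ a - b := by
  rcases hb.eq_or_lt with rfl | hb'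
  · simpa using hba
  have ha : 0 < a := hb'.trans_le hba
  have hmono : min 1 (R / a) ≤ min 1 (R / b) :=
    min_le_min le_rfl (div_le_div_of_nonneg_left hR hb' hba)
  rw [abs_of_nonpos (sub_nonpos.2 hmono)]
  rcases le_total a R with haR | haR
  · rw [min_eq_left ((one_le_div ha).2 haR), min_eq_left ((one_le_div hb').2 (hba.trans haR))]
    linarith
  rcases le_total b R with hbR | hbR
  · rw [min_eq_right ((div_le_one ha).2 haR), min_eq_left ((one_le_div hb').2 hbR)]
    have h1 : R / a ≤ 1 := (div_le_one ha).2 haR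
    nlinarith [mul_le_mul_of_nonneg_left hba (sub_nonneg.2 h1), div_mul_cancel₀ R ha.ne']
  · rw [min_eq_right ((div_le_one ha).2 haR), min_eq_right ((div_le_one hb').2 hbR)]
    have h1 : R / a ≤ 1 := (div_le_one ha).2 haR
    have h2 : -(R / a - R / b) * b = R / a * (a - b) := by field_simp; ring
    rw [h2]
    nlinarith [sub_nonneg.2 hba]

theorem lipschitzWith_radialRetraction (hR : 0 ≤ R) :
    LipschitzWith 2 (radialRetraction R : E → E) := by
  refine LipschitzWith.of_dist_le_mul fun x y ↦ ?_
  wlog hyx : ‖y‖ ≤ ‖x‖ generalizing x y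
  · rw [dist_comm, dist_comm x]; exact this y x (le_of_not_ge hyx)
  set c : E → ℝ := fun z ↦ min 1 (R / ‖z‖)
  have hc : 0 ≤ c x ∧ c x ≤ 1 := ⟨le_min zero_le_one (by positivity), min_le_left _ _⟩
  have hsplit : radialRetraction R x - radialRetraction R y = c x • (x - y) + (c x - c y) • y := by
    simp only [radialRetraction, c, smul_sub, sub_smul]; abel
  rw [dist_eq_norm, dist_eq_norm, hsplit, NNReal.coe_ofNat]
  calc ‖c x • (x - y) + (c x - c y) • y‖
      ≤ c x * ‖x - y‖ + |c x - c y| * ‖y‖ := by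
        refine (norm_add_le _ _).trans ?_
        rw [norm_smul, norm_smul, Real.norm_of_nonneg hc.1, Real.norm_eq_abs]
    _ ≤ ‖x - y‖ + (‖x‖ - ‖y‖) := by
        gcongr
        · exact mul_le_of_le_one_left (norm_nonneg _) hc.2
        · exact abs_min_one_div_sub_mul_le hR (norm_nonneg _) hyx
    _ ≤ 2 * ‖x - y‖ := by linarith [norm_sub_norm_le x y]

theorem IsIntegralCurveOn.hasDerivWithinAt_Ici {γ : ℝ → E} {v : ℝ → E → E} {a b t : ℝ}
    (hγ : IsIntegralCurveOn γ v (Icc a b)) (ht : t ∈ Ico a b) :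
    HasDerivWithinAt γ (v t (γ t)) (Ici t) t :=
  (hγ t (Ico_subset_Icc_self ht)).mono_of_mem_nhdsWithin (Icc_mem_nhdsGE_of_mem ht)

theorem isIntegralCurveOn_const {v : ℝ → E → E} {s : Set ℝ} {x : E} (h : ∀ t ∈ s, v t x = 0) :
    IsIntegralCurveOn (fun _ ↦ x) v s := fun t ht ↦ by
  simpa [h t ht] using hasDerivWithinAt_const t s x

theorem IsIntegralCurveOn.comp_const_sub {γ : ℝ → E} {v : ℝ → E → E} {a b : ℝ}
    (hγ : IsIntegralCurveOn γ v (Icc a b)) :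
    IsIntegralCurveOn (fun t ↦ γ (a + b - t)) (fun t x ↦ -v (a + b - t) x) (Icc a b) := by
  intro t ht
  have hmaps : MapsTo (fun t ↦ a + b - t) (Icc a b) (Icc a b) := fun x hx ↦
    ⟨by linarith [hx.2], by linarith [hx.1]⟩
  have := (hγ _ (hmaps ht)).scomp t ((hasDerivAt_id t).const_sub (a + b)).hasDerivWithinAt hmaps
  simpa [Function.comp_def] using this

theorem IsIntegralCurveOn.dist_le_dist_mul_exp {v : ℝ → E → E} {K : ℝ≥0} {S : Set E} {a b : ℝ}
    (hv : ∀ t ∈ Icc a b, LipschitzOnWith K (v t) S) {γ γ' : ℝ → E}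
    (hγ : IsIntegralCurveOn γ v (Icc a b)) (hγS : ∀ t ∈ Icc a b, γ t ∈ S)
    (hγ' : IsIntegralCurveOn γ' v (Icc a b)) (hγ'S : ∀ t ∈ Icc a b, γ' t ∈ S) :
    ∀ t ∈ Icc a b, dist (γ t) (γ' t) ≤ dist (γ a) (γ' a) * Real.exp (K * (t - a)) :=
  dist_le_of_trajectories_ODE_of_mem (fun t ht ↦ hv t (Ico_subset_Icc_self ht)) hγ.continuousOn
    (fun _ ht ↦ hγ.hasDerivWithinAt_Ici ht) (fun t ht ↦ hγS t (Ico_subset_Icc_self ht))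
    hγ'.continuousOn (fun _ ht ↦ hγ'.hasDerivWithinAt_Ici ht)
    (fun t ht ↦ hγ'S t (Ico_subset_Icc_self ht)) le_rfl

theorem IsIntegralCurveOn.dist_left_le_exp_mul_dist_right {v : ℝ → E → E} {K : ℝ≥0} {S : Set E}
    {a b : ℝ} (hab : a ≤ b) (hv : ∀ t ∈ Icc a b, LipschitzOnWith K (v t) S) {γ γ' : ℝ → E}
    (hγ : IsIntegralCurveOn γ v (Icc a b)) (hγS : ∀ t ∈ Icc a b, γ t ∈ S)
    (hγ' : IsIntegralCurveOn γ' v (Icc a b)) (hγ'S : ∀ t ∈ Icc a b, γ' t ∈ S) :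
    dist (γ a) (γ' a) ≤ Real.exp (K * (b - a)) * dist (γ b) (γ' b) := by
  have hrev : ∀ t ∈ Icc a b, a + b - t ∈ Icc a b := fun t ht ↦
    ⟨by linarith [ht.2], by linarith [ht.1]⟩
  have hvrev : ∀ t ∈ Icc a b, LipschitzOnWith K (fun x ↦ -v (a + b - t) x) S := fun t ht ↦
    LipschitzOnWith.of_dist_le_mul fun x hx y hy ↦ by
      simpa only [dist_neg_neg] using (hv _ (hrev t ht)).dist_le_mul x hx y hy
  have := hγ.comp_const_sub.dist_le_dist_mul_exp hvrev (fun t ht ↦ hγS _ (hrev t ht))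
    hγ'.comp_const_sub (fun t ht ↦ hγ'S _ (hrev t ht)) b (right_mem_Icc.2 hab)
  simpa [mul_comm] using this

theorem exists_isIntegralCurveOn_Icc [CompleteSpace E] {v : ℝ → E → E} {K L : ℝ≥0} {a b : ℝ}
    (hab : a ≤ b) (hlip : ∀ t ∈ Icc a b, LipschitzWith K (v t))
    (hcont : ∀ x, ContinuousOn (v · x) (Icc a b)) (hbound : ∀ t ∈ Icc a b, ∀ x, ‖v t x‖ ≤ L)
    (x : E) : ∃ γ : ℝ → E, γ a = x ∧ IsIntegralCurveOn γ v (Icc a b) :=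
  IsPicardLindelof.exists_eq_forall_mem_Icc_hasDerivWithinAt₀
    (t₀ := ⟨a, left_mem_Icc.2 hab⟩) (a := L * (b - a).toNNReal)
    { lipschitzOnWith := fun t ht ↦ (hlip t ht).lipschitzOnWith
      continuousOn := fun x _ ↦ hcont x
      norm_le := fun t ht x _ ↦ hbound t ht x
      mul_max_le := by simp [hab] }

theorem exists_isIntegralCurveOn_mem_closedBall [CompleteSpace E] {W : ℝ → E → E} {K : ℝ≥0}
    (hR : 0 ≤ R) (hlip : ∀ t ∈ Icc (0 : ℝ) 1, LipschitzOnWith K (W t) (closedBall 0 R))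
    (hcont : ∀ x ∈ closedBall (0 : E) R, ContinuousOn (W · x) (Icc 0 1))
    (hW0 : ∀ t ∈ Icc (0 : ℝ) 1, W t 0 = 0) {x : E} (hx : Real.exp (2 * K) * ‖x‖ ≤ R) :
    ∃ γ : ℝ → E, γ 0 = x ∧ IsIntegralCurveOn γ W (Icc 0 1) ∧
      ∀ t ∈ Icc (0 : ℝ) 1, γ t ∈ closedBall 0 R := by
  -- extend `W t` from the ball to a globally Lipschitz field
  set W' : ℝ → E → E := fun t y ↦ W t (radialRetraction R y)
  have hmaps : MapsTo (radialRetraction R) univ (closedBall (0 : E) R) := fun y _ ↦ by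
    simp [norm_radialRetraction hR]
  have hlip' : ∀ t ∈ Icc (0 : ℝ) 1, LipschitzWith (K * 2) (W' t) := fun t ht ↦
    lipschitzOnWith_univ.1 <|
      (hlip t ht).comp (lipschitzWith_radialRetraction hR).lipschitzOnWith hmaps
  have hbound : ∀ t ∈ Icc (0 : ℝ) 1, ∀ y, ‖W' t y‖ ≤ (K * R.toNNReal : ℝ≥0) := fun t ht y ↦ by
    have h := (hlip t ht).norm_sub_le (hmaps (mem_univ y)) (mem_closedBall_self hR)
    rw [hW0 t ht, sub_zero, sub_zero] at h
    refine h.trans ?_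
    simp only [norm_radialRetraction hR, NNReal.coe_mul, Real.coe_toNNReal _ hR]
    gcongr
    exact min_le_right _ _
  obtain ⟨γ, hγ0, hγ⟩ := exists_isIntegralCurveOn_Icc zero_le_one hlip'
    (fun y ↦ hcont _ (hmaps (mem_univ y))) hbound x
  have hzero : IsIntegralCurveOn (fun _ ↦ (0 : E)) W' (Icc 0 1) :=
    isIntegralCurveOn_const fun t ht ↦ by simp [W', radialRetraction, hW0 t ht]
  have hball : ∀ t ∈ Icc (0 : ℝ) 1, γ t ∈ closedBall 0 R := fun t ht ↦ by
    have h := hγ.dist_le_dist_mul_exp (fun t ht ↦ (hlip' t ht).lipschitzOnWith (s := univ))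
      (fun _ _ ↦ mem_univ _) hzero (fun _ _ ↦ mem_univ _) t ht
    rw [mem_closedBall_zero_iff]
    simp only [dist_zero_right, hγ0, sub_zero] at h
    refine h.trans (le_trans ?_ hx)
    rw [mul_comm]
    exact mul_le_mul_of_nonneg_right
      (Real.exp_le_exp.2 (by push_cast; nlinarith [ht.1, ht.2, K.2])) (norm_nonneg x)
  refine ⟨γ, hγ0, fun t ht ↦ ?_, hball⟩
  simpa [W', radialRetraction_of_norm_le (mem_closedBall_zero_iff.1 (hball t ht))] using hγ t ht

theorem exists_biLipschitz_timeOne_map [CompleteSpace E] {W : ℝ → E → E} {K : ℝ≥0}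
    (hR : 0 ≤ R) (hK : K ≤ 1 / 2)
    (hlip : ∀ t ∈ Icc (0 : ℝ) 1, LipschitzOnWith K (W t) (closedBall 0 R))
    (hcont : ∀ x ∈ closedBall (0 : E) R, ContinuousOn (W · x) (Icc 0 1))
    (hW0 : ∀ t ∈ Icc (0 : ℝ) 1, W t 0 = 0) :
    ∃ φ : E → E, φ 0 = 0 ∧
      (∀ x ∈ closedBall (0 : E) (R / 3), ∀ y ∈ closedBall (0 : E) (R / 3),
        dist (φ x) (φ y) ≤ Real.exp K * dist x y ∧ dist x y ≤ Real.exp K * dist (φ x) (φ y)) ∧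
      ∀ x ∈ closedBall (0 : E) (R / 3), ∃ γ : ℝ → E, γ 0 = x ∧ γ 1 = φ x ∧
        IsIntegralCurveOn γ W (Icc 0 1) ∧ ∀ t ∈ Icc (0 : ℝ) 1, γ t ∈ closedBall 0 R := by
  have hexp : Real.exp (2 * K) ≤ 3 := by
    have : Real.exp (2 * K) ≤ Real.exp 1 := Real.exp_le_exp.2 (by linarith)
    linarith [Real.exp_one_lt_d9]
  have hex : ∀ x ∈ closedBall (0 : E) (R / 3), ∃ γ : ℝ → E, γ 0 = x ∧
      IsIntegralCurveOn γ W (Icc 0 1) ∧ ∀ t ∈ Icc (0 : ℝ) 1, γ t ∈ closedBall 0 R :=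
    fun x hx ↦ exists_isIntegralCurveOn_mem_closedBall hR hlip hcont hW0 <| by
      have := mem_closedBall_zero_iff.1 hx
      nlinarith [norm_nonneg x, Real.exp_pos (2 * K)]
  choose! γ hγ0 hγ hγR using hex
  have hone : (1 : ℝ) ∈ Icc (0 : ℝ) 1 := right_mem_Icc.2 zero_le_one
  have hupper : ∀ x ∈ closedBall (0 : E) (R / 3), ∀ y ∈ closedBall (0 : E) (R / 3),
      dist (γ x 1) (γ y 1) ≤ Real.exp K * dist x y := fun x hx y hy ↦ by
    simpa [hγ0 x hx, hγ0 y hy, mul_comm] using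
      (hγ x hx).dist_le_dist_mul_exp hlip (hγR x hx) (hγ y hy) (hγR y hy) 1 hone
  have hlower : ∀ x ∈ closedBall (0 : E) (R / 3), ∀ y ∈ closedBall (0 : E) (R / 3),
      dist x y ≤ Real.exp K * dist (γ x 1) (γ y 1) := fun x hx y hy ↦ by
    simpa [hγ0 x hx, hγ0 y hy] using (hγ x hx).dist_left_le_exp_mul_dist_right zero_le_one hlip
      (hγR x hx) (hγ y hy) (hγR y hy)
  refine ⟨fun x ↦ γ x 1, ?_, fun x hx y hy ↦ ⟨hupper x hx y hy, hlower x hx y hy⟩,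
    fun x hx ↦ ⟨γ x, hγ0 x hx, rfl, hγ x hx, hγR x hx⟩⟩
  have h0 : (0 : E) ∈ closedBall (0 : E) (R / 3) := mem_closedBall_self (by positivity)
  have := (hγ 0 h0).dist_le_dist_mul_exp hlip (hγR 0 h0)
    (isIntegralCurveOn_const (x := (0 : E)) hW0) (fun _ _ ↦ mem_closedBall_self hR) 1 hone
  simpa [hγ0 0 h0] using this

end Flow

section VanishingLipschitz

variable {E F : Type*} [NormedAddCommGroup E] [NormedAddCommGroup F]

/-- `u` vanishes at `0` and `‖u p - u q‖ ≤ C * max ‖p‖ ‖q‖ ^ n * ‖p - q‖` on `closedBall 0 R`,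
as a polynomial vanishing to order `n + 1` at `0` does near `0`. -/
def VanishingLipschitz (n : ℕ) (C : ℝ≥0) (R : ℝ) (u : E → F) : Prop :=
  u 0 = 0 ∧ ∀ p ∈ closedBall (0 : E) R, ∀ q ∈ closedBall (0 : E) R,
    ‖u p - u q‖ ≤ C * max ‖p‖ ‖q‖ ^ n * ‖p - q‖

namespace VanishingLipschitz

variable {n m : ℕ} {C C' : ℝ≥0} {R : ℝ} {u v : E → F}

theorem norm_le (hu : VanishingLipschitz n C R u) (hR : 0 ≤ R) {p : E}
    (hp : p ∈ closedBall 0 R) : ‖u p‖ ≤ C * ‖p‖ ^ (n + 1) := by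
  simpa [hu.1, pow_succ, mul_assoc] using hu.2 p hp 0 (mem_closedBall_self hR)

theorem mono (hu : VanishingLipschitz n C R u) (hC : C ≤ C') : VanishingLipschitz n C' R u :=
  ⟨hu.1, fun p hp q hq ↦ (hu.2 p hp q hq).trans (by gcongr)⟩

theorem congr (hu : VanishingLipschitz n C R u) (h : ∀ p, u p = v p) :
    VanishingLipschitz n C R v := by
  simpa only [funext h] using hu

theorem add (hu : VanishingLipschitz n C R u) (hv : VanishingLipschitz n C' R v) :
    VanishingLipschitz n (C + C') R (fun p ↦ u p + v p) := by
  refine ⟨by simp [hu.1, hv.1], fun p hp q hq ↦ ?_⟩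
  calc ‖u p + v p - (u q + v q)‖ ≤ ‖u p - u q‖ + ‖v p - v q‖ := by
        rw [add_sub_add_comm]; exact norm_add_le _ _
    _ ≤ _ := by push_cast; linarith [hu.2 p hp q hq, hv.2 p hp q hq]

theorem const_smul {𝕜 : Type*} [NormedField 𝕜] [NormedSpace 𝕜 F]
    (hu : VanishingLipschitz n C R u) (a : 𝕜) :
    VanishingLipschitz n (‖a‖₊ * C) R (fun p ↦ a • u p) := by
  refine ⟨by simp [hu.1], fun p hp q hq ↦ ?_⟩
  rw [← smul_sub, norm_smul, NNReal.coe_mul, coe_nnnorm, mul_assoc, mul_assoc]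
  exact mul_le_mul_of_nonneg_left (by simpa [mul_assoc] using hu.2 p hp q hq) (norm_nonneg a)

theorem star [StarAddMonoid F] [NormedStarGroup F] (hu : VanishingLipschitz n C R u) :
    VanishingLipschitz n C R (fun p ↦ star (u p)) :=
  ⟨by simp [hu.1], fun p hp q hq ↦ by simpa [← star_sub] using hu.2 p hp q hq⟩

theorem mul {A : Type*} [NormedRing A] {u v : E → A} (hu : VanishingLipschitz n C R u)
    (hv : VanishingLipschitz m C' R v) :
    VanishingLipschitz (n + m + 1) (2 * C * C') R (fun p ↦ u p * v p) := by
  refine ⟨by simp [hu.1], fun p hp q hq ↦ ?_⟩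
  have hR : 0 ≤ R := le_trans (norm_nonneg p) (mem_closedBall_zero_iff.1 hp)
  set M := max ‖p‖ ‖q‖
  have hpM : ‖p‖ ≤ M := le_max_left _ _
  have hqM : ‖q‖ ≤ M := le_max_right _ _
  have hvp : ‖v p‖ ≤ C' * M ^ (m + 1) :=
    (hv.norm_le hR hp).trans (by gcongr)
  have huq : ‖u q‖ ≤ C * M ^ (n + 1) :=
    (hu.norm_le hR hq).trans (by gcongr)
  have h1 := hu.2 p hp q hq
  have h2 := hv.2 p hp q hq
  calc ‖u p * v p - u q * v q‖ = ‖(u p - u q) * v p + u q * (v p - v q)‖ := by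
        congr 1; noncomm_ring
    _ ≤ ‖u p - u q‖ * ‖v p‖ + ‖u q‖ * ‖v p - v q‖ :=
        (norm_add_le _ _).trans (add_le_add (norm_mul_le _ _) (norm_mul_le _ _))
    _ ≤ (C * M ^ n * ‖p - q‖) * (C' * M ^ (m + 1))
          + (C * M ^ (n + 1)) * (C' * M ^ m * ‖p - q‖) := by
        gcongr
    _ = 2 * C * C' * M ^ (n + m + 1) * ‖p - q‖ := by ring

theorem normSq (hu : VanishingLipschitz n C R u) :
    VanishingLipschitz (2 * n + 1) (2 * C ^ 2) R (fun p ↦ ‖u p‖ ^ 2) := by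
  refine ⟨by simp [hu.1], fun p hp q hq ↦ ?_⟩
  have hR : 0 ≤ R := le_trans (norm_nonneg p) (mem_closedBall_zero_iff.1 hp)
  set M := max ‖p‖ ‖q‖
  have hup : ‖u p‖ ≤ C * M ^ (n + 1) := (hu.norm_le hR hp).trans (by gcongr; exact le_max_left _ _)
  have huq : ‖u q‖ ≤ C * M ^ (n + 1) := (hu.norm_le hR hq).trans (by gcongr; exact le_max_right _ _)
  calc ‖‖u p‖ ^ 2 - ‖u q‖ ^ 2‖ = |‖u p‖ - ‖u q‖| * (‖u p‖ + ‖u q‖) := by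
        rw [Real.norm_eq_abs, sq_sub_sq, abs_mul, abs_of_nonneg (by positivity), mul_comm]
    _ ≤ (C * M ^ n * ‖p - q‖) * (C * M ^ (n + 1) + C * M ^ (n + 1)) := by
        gcongr
        exact (abs_norm_sub_norm_le _ _).trans (hu.2 p hp q hq)
    _ = ((2 * C ^ 2 : ℝ≥0) : ℝ) * M ^ (2 * n + 1) * ‖p - q‖ := by push_cast; ring

theorem of_succ (hR : R ≤ 1) (hu : VanishingLipschitz (n + 1) C R u) :
    VanishingLipschitz n C R u := by
  refine ⟨hu.1, fun p hp q hq ↦ (hu.2 p hp q hq).trans ?_⟩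
  have hM : max ‖p‖ ‖q‖ ≤ 1 :=
    max_le ((mem_closedBall_zero_iff.1 hp).trans hR) ((mem_closedBall_zero_iff.1 hq).trans hR)
  exact mul_le_mul_of_nonneg_right (mul_le_mul_of_nonneg_left
    (pow_le_pow_of_le_one (by positivity) hM n.le_succ) C.2) (norm_nonneg _)

theorem lipschitzOnWith (hu : VanishingLipschitz 0 C R u) :
    LipschitzOnWith C u (closedBall 0 R) :=
  LipschitzOnWith.of_dist_le_mul fun p hp q hq ↦ by
    simpa [dist_eq_norm] using hu.2 p hp q hq

theorem apply {𝕜 ι : Type*} [RCLike 𝕜] [Fintype ι] (i : ι) :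
    VanishingLipschitz 0 1 R (fun p : EuclideanSpace 𝕜 ι ↦ p i) :=
  ⟨rfl, fun p _ q _ ↦ by simpa using PiLp.norm_apply_le (p - q) i⟩

theorem toLp_pair {𝕜 : Type*} [RCLike 𝕜] {u v : E → 𝕜} (hu : VanishingLipschitz n C R u)
    (hv : VanishingLipschitz n C' R v) :
    VanishingLipschitz n (C + C') R (fun p ↦ !₂[u p, v p]) := by
  have hnorm : ∀ w : EuclideanSpace 𝕜 (Fin 2), ‖w‖ ≤ ‖w 0‖ + ‖w 1‖ := fun w ↦ by
    have h := EuclideanSpace.norm_sq_eq w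
    rw [Fin.sum_univ_two] at h
    nlinarith [norm_nonneg w, norm_nonneg (w 0), norm_nonneg (w 1)]
  refine ⟨by ext i; fin_cases i <;> simp [hu.1, hv.1], fun p hp q hq ↦ (hnorm _).trans ?_⟩
  simpa [add_mul] using add_le_add (hu.2 p hp q hq) (hv.2 p hp q hq)

theorem norm_inv_smul_le [NormedSpace ℝ F] {N : E → F} {D : E → ℝ} {b k : ℝ≥0} (hk : 0 < k)
    (hN : VanishingLipschitz (n + 1) b R N)
    (hD : ∀ p ∈ closedBall (0 : E) R, k * ‖p‖ ^ (n + 1) ≤ D p) {p : E}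
    (hp : p ∈ closedBall 0 R) : ‖(D p)⁻¹ • N p‖ ≤ b / k * ‖p‖ := by
  have hR : 0 ≤ R := le_trans (norm_nonneg p) (mem_closedBall_zero_iff.1 hp)
  rcases eq_or_ne p 0 with rfl | hp0
  · simp [hN.1]
  have hDp : 0 < k * ‖p‖ ^ (n + 1) := by have := norm_pos_iff.2 hp0; positivity
  rw [norm_smul, norm_inv, Real.norm_of_nonneg (hDp.le.trans (hD p hp)), inv_mul_eq_div,
    div_le_iff₀ (hDp.trans_le (hD p hp))]
  calc ‖N p‖ ≤ b * ‖p‖ ^ (n + 1 + 1) := hN.norm_le hR hp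
    _ = b / k * ‖p‖ * (k * ‖p‖ ^ (n + 1)) := by field_simp; ring
    _ ≤ b / k * ‖p‖ * D p := by gcongr; exact hD p hp

theorem norm_inv_smul_sub_inv_smul_le [NormedSpace ℝ F] {N : E → F} {D : E → ℝ} {b d k : ℝ≥0}
    (hk : 0 < k) (hN : VanishingLipschitz (n + 1) b R N) (hDl : VanishingLipschitz n d R D)
    (hD : ∀ p ∈ closedBall (0 : E) R, k * ‖p‖ ^ (n + 1) ≤ D p) {p q : E}
    (hp : p ∈ closedBall 0 R) (hq : q ∈ closedBall 0 R) (hqp : ‖q‖ ≤ ‖p‖) (hq0 : q ≠ 0) :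
    ‖(D p)⁻¹ • N p - (D q)⁻¹ • N q‖ ≤ (b / k + b * d / k ^ 2) * ‖p - q‖ := by
  have hP : 0 < ‖p‖ := (norm_pos_iff.2 hq0).trans_le hqp
  have hkP : (k : ℝ) * ‖p‖ ^ (n + 1) ≤ D p := hD p hp
  have hDp : 0 < D p := lt_of_lt_of_le (by positivity) hkP
  have hDq : 0 < D q := lt_of_lt_of_le (by have := norm_pos_iff.2 hq0; positivity) (hD q hq)
  have hN' := hN.2 p hp q hq
  have hD' := hDl.2 q hq p hp
  rw [max_eq_right hqp, Real.norm_eq_abs, norm_sub_rev] at hD'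
  rw [max_eq_left hqp] at hN'
  have h1 : ‖N p - N q‖ / D p ≤ b / k * ‖p - q‖ := by
    rw [div_le_iff₀ hDp]
    calc ‖N p - N q‖ ≤ b * ‖p‖ ^ (n + 1) * ‖p - q‖ := hN'
      _ = b / k * ‖p - q‖ * (k * ‖p‖ ^ (n + 1)) := by field_simp
      _ ≤ b / k * ‖p - q‖ * D p := by gcongr
  have h2 : |D q - D p| / D p ≤ d / k * ‖p - q‖ / ‖p‖ := by
    rw [div_le_iff₀ hDp]
    calc |D q - D p| ≤ d * ‖p‖ ^ n * ‖p - q‖ := hD'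
      _ = d / k * ‖p - q‖ / ‖p‖ * (k * ‖p‖ ^ (n + 1)) := by field_simp; ring
      _ ≤ d / k * ‖p - q‖ / ‖p‖ * D p := by gcongr
  have h3 : ‖(D q)⁻¹ • N q‖ ≤ b / k * ‖p‖ :=
    (norm_inv_smul_le hk hN hD hq).trans (by gcongr)
  have hsplit : (D p)⁻¹ • N p - (D q)⁻¹ • N q
      = (D p)⁻¹ • (N p - N q) + ((D q - D p) / D p) • ((D q)⁻¹ • N q) := by
    have hc : (D q - D p) / D p * (D q)⁻¹ = (D p)⁻¹ - (D q)⁻¹ := by field_simp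
    rw [smul_smul, hc, smul_sub, sub_smul]
    abel
  rw [hsplit]
  calc _ ≤ ‖N p - N q‖ / D p + |D q - D p| / D p * ‖(D q)⁻¹ • N q‖ := by
        refine (norm_add_le _ _).trans (le_of_eq ?_)
        rw [norm_smul, norm_smul, norm_inv, Real.norm_of_nonneg hDp.le, Real.norm_eq_abs,
          abs_div, abs_of_pos hDp, inv_mul_eq_div]
    _ ≤ b / k * ‖p - q‖ + d / k * ‖p - q‖ / ‖p‖ * (b / k * ‖p‖) := by gcongr
    _ = (b / k + b * d / k ^ 2) * ‖p - q‖ := by field_simp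

theorem inv_smul [NormedSpace ℝ F] {N : E → F} {D : E → ℝ} {b d k : ℝ≥0} (hk : 0 < k)
    (hN : VanishingLipschitz (n + 1) b R N) (hDl : VanishingLipschitz n d R D)
    (hD : ∀ p ∈ closedBall (0 : E) R, k * ‖p‖ ^ (n + 1) ≤ D p) :
    VanishingLipschitz 0 (b / k + b * d / k ^ 2) R (fun p ↦ (D p)⁻¹ • N p) := by
  refine ⟨by simp [hN.1], fun p hp q hq ↦ ?_⟩
  wlog hqp : ‖q‖ ≤ ‖p‖ generalizing p q
  · rw [norm_sub_rev, max_comm, norm_sub_rev p]; exact this q hq p hp (le_of_not_ge hqp)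
  rw [max_eq_left hqp, pow_zero, mul_one]
  push_cast
  rcases eq_or_ne q 0 with rfl | hq0
  · simp only [hN.1, smul_zero, sub_zero]
    refine (norm_inv_smul_le hk hN hD hp).trans ?_
    gcongr
    exact le_add_of_nonneg_right (by positivity)
  exact norm_inv_smul_sub_inv_smul_le hk hN hDl hD hp hq hqp hq0

end VanishingLipschitz

end VanishingLipschitz

theorem norm_add_ofReal_mul_bounds {t₀ c : ℂ} (hc : ‖c‖ ≤ ‖t₀‖ / 2) {τ : ℝ}
    (hτ : τ ∈ Icc (0 : ℝ) 1) : ‖t₀‖ / 2 ≤ ‖t₀ + τ * c‖ ∧ ‖t₀ + τ * c‖ ≤ 2 * ‖t₀‖ := by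
  have hτc : ‖(τ : ℂ) * c‖ ≤ ‖t₀‖ / 2 := by
    rw [norm_mul, Complex.norm_real, Real.norm_of_nonneg hτ.1]
    nlinarith [hτ.2, norm_nonneg c]
  have h₁ := norm_sub_le (t₀ + τ * c) (τ * c)
  rw [add_sub_cancel_right] at h₁
  have h₂ := norm_add_le t₀ (τ * c)
  constructor <;> linarith

local notation "ℂ²" => EuclideanSpace ℂ (Fin 2)

noncomputable section

namespace T245

/-- The coercivity estimate for `D` below, with `a = ‖x‖`, `b = ‖y‖`, `σ = ‖s‖` and `eᵢ ≥ ‖dᵢ‖`: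
if `σb² ≤ a²` then `e₁ ≥ a²`; if `4a² ≤ σb²` then `e₁ ≥ σb²/2`; otherwise `20b ≤ σ²` makes
`5b³ ≤ σa²`, so that `e₂ ≥ σa²`. -/
theorem pow_four_add_pow_four_le {a b σ e₁ e₂ : ℝ} (ha : 0 ≤ a) (hb : 0 ≤ b) (hσ : 0 < σ)
    (hbσ : 20 * b ≤ σ ^ 2) (h₁ : |2 * a ^ 2 - σ * b ^ 2| ≤ e₁)
    (h₂ : 2 * σ * a ^ 2 - 5 * b ^ 3 ≤ e₂) :
    σ ^ 4 * (a ^ 4 + b ^ 4) ≤ (σ ^ 4 + 2 * σ ^ 2 + 16) * (2 * e₁ ^ 2 + e₂ ^ 2) := by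
  have hK : 0 ≤ σ ^ 4 + 2 * σ ^ 2 + 16 := by positivity
  have hσ2 : 0 ≤ σ ^ 2 := by positivity
  have hpow : ∀ {x y : ℝ}, 0 ≤ x → x ≤ y → x ^ 2 ≤ y ^ 2 := fun hx hxy ↦ pow_le_pow_left₀ hx hxy 2
  rcases le_total (σ * b ^ 2) (a ^ 2) with hA | hA
  · have he₁ : a ^ 2 ≤ e₁ := le_trans (by rw [abs_of_nonneg (by nlinarith)]; linarith) h₁
    have hb4 : σ ^ 2 * b ^ 4 ≤ a ^ 4 := by nlinarith [hpow (by positivity) hA]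
    nlinarith [hpow (by positivity) he₁, mul_le_mul_of_nonneg_left hb4 hσ2,
      mul_nonneg hK (sq_nonneg e₂), mul_nonneg hσ2 (pow_nonneg ha 4)]
  rcases le_total (4 * a ^ 2) (σ * b ^ 2) with hB | hB
  · have he₁ : σ * b ^ 2 / 2 ≤ e₁ := le_trans (by rw [abs_of_nonpos (by linarith)]; linarith) h₁
    have ha4 : 16 * a ^ 4 ≤ σ ^ 2 * b ^ 4 := by nlinarith [hpow (by positivity) hB]
    nlinarith [hpow (by positivity) he₁, mul_le_mul_of_nonneg_left ha4 hσ2,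
      mul_nonneg hK (sq_nonneg e₂), mul_nonneg hσ2 (pow_nonneg hb 4),
      mul_nonneg (pow_nonneg hσ2 3) (pow_nonneg hb 4)]
  · have hb3 : 5 * b ^ 3 ≤ σ * a ^ 2 := by nlinarith [mul_le_mul_of_nonneg_left hB hb]
    have he₂ : σ * a ^ 2 ≤ e₂ := by linarith
    have hb4 : σ ^ 2 * b ^ 4 ≤ 16 * a ^ 4 := by nlinarith [hpow (by positivity) hB]
    nlinarith [hpow (by positivity) he₂, mul_le_mul_of_nonneg_left hb4 hσ2,
      mul_nonneg hK (sq_nonneg e₁), mul_nonneg (pow_nonneg hσ2 2) (pow_nonneg ha 4),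
      mul_nonneg (pow_nonneg hσ2 3) (pow_nonneg ha 4)]

def f (s : ℂ) (v : ℂ²) : ℂ := v 0 ^ 4 + v 1 ^ 5 + s * v 0 ^ 2 * v 1 ^ 2

-- `∂ₓ f_s = 2x·d₁` and `∂_y f_s = y·d₂`.
def d₁ (s : ℂ) (v : ℂ²) : ℂ := 2 * v 0 ^ 2 + s * v 1 ^ 2

def d₂ (s : ℂ) (v : ℂ²) : ℂ := 5 * v 1 ^ 3 + 2 * s * v 0 ^ 2

def D (s : ℂ) (v : ℂ²) : ℝ := 2 * ‖d₁ s v‖ ^ 2 + ‖d₂ s v‖ ^ 2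

def N (s : ℂ) (v : ℂ²) : ℂ² :=
  !₂[v 0 * v 1 ^ 2 * conj (d₁ s v), v 0 ^ 2 * v 1 * conj (d₂ s v)]

-- Kuo's vector field: `∂f_s · V c s = -c·x²y² = -c·∂_s f_s` (`grad_f_mul_V`). Where `D s v = 0`
-- the inverse is `0`, so `V c s 0 = 0`.
def V (c s : ℂ) (v : ℂ²) : ℂ² := -c • (D s v)⁻¹ • N s v

theorem grad_f_mul_N (s : ℂ) (v : ℂ²) :
    (4 * v 0 ^ 3 + 2 * s * v 0 * v 1 ^ 2) * N s v 0
      + (5 * v 1 ^ 4 + 2 * s * v 0 ^ 2 * v 1) * N s v 1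
      = v 0 ^ 2 * v 1 ^ 2 * D s v := by
  have e₁ : 4 * v 0 ^ 3 + 2 * s * v 0 * v 1 ^ 2 = 2 * v 0 * d₁ s v := by rw [d₁]; ring
  have e₂ : 5 * v 1 ^ 4 + 2 * s * v 0 ^ 2 * v 1 = v 1 * d₂ s v := by rw [d₂]; ring
  rw [e₁, e₂, D]
  push_cast
  simp only [N, Matrix.cons_val_zero, Matrix.cons_val_one]
  linear_combination (2 * v 0 ^ 2 * v 1 ^ 2) * Complex.mul_conj' (d₁ s v)
    + v 0 ^ 2 * v 1 ^ 2 * Complex.mul_conj' (d₂ s v)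

theorem grad_f_mul_V (c s : ℂ) {v : ℂ²} (hD : D s v = 0 → v = 0) :
    (4 * v 0 ^ 3 + 2 * s * v 0 * v 1 ^ 2) * V c s v 0
      + (5 * v 1 ^ 4 + 2 * s * v 0 ^ 2 * v 1) * V c s v 1
      = -c * v 0 ^ 2 * v 1 ^ 2 := by
  by_cases h : D s v = 0
  · simp [hD h]
  have h' : ((D s v : ℝ) : ℂ) ≠ 0 := by exact_mod_cast h
  simp only [V, PiLp.smul_apply, smul_eq_mul, Complex.real_smul, Complex.ofReal_inv]
  field_simp
  linear_combination (-c) * grad_f_mul_N s v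

theorem f_eq_of_isIntegralCurveOn {t₀ c : ℂ} {γ : ℝ → ℂ²}
    (hγ : IsIntegralCurveOn γ (fun τ ↦ V c (t₀ + τ * c)) (Icc 0 1))
    (hD : ∀ τ ∈ Icc (0 : ℝ) 1, D (t₀ + τ * c) (γ τ) = 0 → γ τ = 0) :
    f (t₀ + c) (γ 1) = f t₀ (γ 0) := by
  set g : ℝ → ℂ := fun τ ↦ f (t₀ + τ * c) (γ τ)
  have hg : ∀ τ ∈ Icc (0 : ℝ) 1, HasDerivWithinAt g 0 (Icc 0 1) τ := fun τ hτ ↦ by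
    have hcoord (i : Fin 2) : HasDerivWithinAt (fun τ ↦ γ τ i) (V c (t₀ + τ * c) (γ τ) i)
        (Icc 0 1) τ :=
      (EuclideanSpace.proj i : ℂ² →L[ℂ] ℂ).restrictScalars ℝ |>.hasFDerivAt.comp_hasDerivWithinAt
        τ (hγ τ hτ)
    have hs : HasDerivWithinAt (fun τ : ℝ ↦ t₀ + τ * c) c (Icc 0 1) τ := by
      simpa using
        ((Complex.ofRealCLM.hasDerivAt (x := τ)).mul_const c).const_add t₀ |>.hasDerivWithinAt
    have := (((hcoord 0).fun_pow 4).add ((hcoord 1).fun_pow 5)).add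
      ((hs.mul ((hcoord 0).fun_pow 2)).mul ((hcoord 1).fun_pow 2))
    refine this.congr_deriv ?_
    simp only [Pi.mul_apply]
    linear_combination grad_f_mul_V c (t₀ + τ * c) (hD τ hτ)
  have hcont : ContinuousOn g (Icc 0 1) := fun τ hτ ↦ (hg τ hτ).continuousWithinAt
  have hconst := constant_of_has_deriv_right_zero hcont fun τ hτ ↦
    (hg τ (Ico_subset_Icc_self hτ)).mono_of_mem_nhdsWithin (Icc_mem_nhdsGE_of_mem hτ)
  simpa [g] using hconst 1 (right_mem_Icc.2 zero_le_one)

theorem norm_pow_four_le_D {μ : ℝ} (hμ : 0 < μ) {s : ℂ} (hs : μ ≤ ‖s‖) {v : ℂ²}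
    (hv : ‖v‖ ≤ μ ^ 2 / 20) : ‖v‖ ^ 4 ≤ 2 * (1 + 2 / μ ^ 2 + 16 / μ ^ 4) * D s v := by
  have hσ : 0 < ‖s‖ := hμ.trans_le hs
  have h₁ : |2 * ‖v 0‖ ^ 2 - ‖s‖ * ‖v 1‖ ^ 2| ≤ ‖d₁ s v‖ := by
    have h := abs_norm_sub_norm_le (2 * v 0 ^ 2) (-(s * v 1 ^ 2))
    rwa [sub_neg_eq_add, norm_neg, norm_mul, norm_mul, norm_pow, norm_pow, Complex.norm_two] at h
  have h₂ : 2 * ‖s‖ * ‖v 0‖ ^ 2 - 5 * ‖v 1‖ ^ 3 ≤ ‖d₂ s v‖ := by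
    have h := norm_sub_norm_le (2 * s * v 0 ^ 2) (-(5 * v 1 ^ 3))
    rwa [sub_neg_eq_add, add_comm, norm_neg, norm_mul, norm_mul, norm_mul, norm_pow, norm_pow,
      Complex.norm_two, Complex.norm_ofNat] at h
  have hb : 20 * ‖v 1‖ ≤ ‖s‖ ^ 2 := by
    nlinarith [PiLp.norm_apply_le v 1]
  have key := pow_four_add_pow_four_le (norm_nonneg _) (norm_nonneg _) hσ hb h₁ h₂
  have hv4 : ‖v‖ ^ 4 ≤ 2 * (‖v 0‖ ^ 4 + ‖v 1‖ ^ 4) := by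
    have h := EuclideanSpace.norm_sq_eq v
    rw [Fin.sum_univ_two] at h
    nlinarith [sq_nonneg (‖v 0‖ ^ 2 - ‖v 1‖ ^ 2)]
  have hmono : 1 + 2 / ‖s‖ ^ 2 + 16 / ‖s‖ ^ 4 ≤ 1 + 2 / μ ^ 2 + 16 / μ ^ 4 := by gcongr
  calc ‖v‖ ^ 4 ≤ 2 * (‖v 0‖ ^ 4 + ‖v 1‖ ^ 4) := hv4
    _ ≤ 2 * ((1 + 2 / ‖s‖ ^ 2 + 16 / ‖s‖ ^ 4) * D s v) := by
        refine mul_le_mul_of_nonneg_left ?_ zero_le_two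
        have e : 1 + 2 / ‖s‖ ^ 2 + 16 / ‖s‖ ^ 4 = (‖s‖ ^ 4 + 2 * ‖s‖ ^ 2 + 16) / ‖s‖ ^ 4 := by
          field_simp
        rw [e, div_mul_eq_mul_div, le_div_iff₀ (by positivity), D]
        linarith [key]
    _ ≤ 2 * (1 + 2 / μ ^ 2 + 16 / μ ^ 4) * D s v := by
        have hD : 0 ≤ D s v := by unfold D; positivity
        rw [mul_assoc]; gcongr

theorem vanishingLipschitz_d₁ {R : ℝ} {B : ℝ≥0} {s : ℂ} (hs : ‖s‖ ≤ B) :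
    VanishingLipschitz 1 (4 + 2 * B) R (d₁ s) := by
  have hx := (VanishingLipschitz.apply (𝕜 := ℂ) (R := R) (0 : Fin 2))
  have hy := (VanishingLipschitz.apply (𝕜 := ℂ) (R := R) (1 : Fin 2))
  refine (((hx.mul hx).const_smul (2 : ℂ)).add ((hy.mul hy).const_smul s)).congr
    (fun v ↦ by simp [d₁, sq]) |>.mono ?_
  rw [← NNReal.coe_le_coe]; push_cast
  rw [Complex.norm_two]; linarith

theorem vanishingLipschitz_d₂ {R : ℝ} (hR : R ≤ 1) {B : ℝ≥0} {s : ℂ} (hs : ‖s‖ ≤ B) :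
    VanishingLipschitz 1 (20 + 4 * B) R (d₂ s) := by
  have hx := (VanishingLipschitz.apply (𝕜 := ℂ) (R := R) (0 : Fin 2))
  have hy := (VanishingLipschitz.apply (𝕜 := ℂ) (R := R) (1 : Fin 2))
  refine ((((hy.mul hy).mul hy).of_succ hR).const_smul (5 : ℂ) |>.add
    ((hx.mul hx).const_smul (2 * s))).congr (fun v ↦ by simp only [smul_eq_mul, d₂]; ring)
    |>.mono ?_
  rw [← NNReal.coe_le_coe]; push_cast
  rw [norm_mul, Complex.norm_two, Complex.norm_ofNat]; linarith

theorem vanishingLipschitz_N {R : ℝ} (hR : R ≤ 1) {B : ℝ≥0} {s : ℂ} (hs : ‖s‖ ≤ B) :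
    VanishingLipschitz 4 (2 * 4 * (4 + 2 * B) + 2 * 4 * (20 + 4 * B)) R (N s) := by
  have hx := (VanishingLipschitz.apply (𝕜 := ℂ) (R := R) (0 : Fin 2))
  have hy := (VanishingLipschitz.apply (𝕜 := ℂ) (R := R) (1 : Fin 2))
  refine VanishingLipschitz.toLp_pair
    (((hx.mul (hy.mul hy)).mul (vanishingLipschitz_d₁ hs).star).mono ?_)
    (((((hx.mul hx).mul hy)).mul (vanishingLipschitz_d₂ hR hs).star).mono ?_)
    |>.congr fun v ↦ by simp [N, sq]
  all_goals norm_num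

theorem vanishingLipschitz_D {R : ℝ} (hR : R ≤ 1) {B : ℝ≥0} {s : ℂ} (hs : ‖s‖ ≤ B) :
    VanishingLipschitz 3 (2 * (2 * (4 + 2 * B) ^ 2) + 2 * (20 + 4 * B) ^ 2) R (D s) := by
  refine ((vanishingLipschitz_d₁ hs).normSq.const_smul (2 : ℝ)).add
    (vanishingLipschitz_d₂ hR hs).normSq |>.congr (fun v ↦ by simp [D]) |>.mono ?_
  norm_num

theorem vanishingLipschitz_V {μ : ℝ} (hμ : 0 < μ) (B : ℝ≥0) :
    ∃ K : ℝ≥0, ∀ c s : ℂ, μ ≤ ‖s‖ → ‖s‖ ≤ B →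
      VanishingLipschitz 0 (‖c‖₊ * K) (min (μ ^ 2 / 20) 1) (V c s) := by
  have hR : min (μ ^ 2 / 20) 1 ≤ 1 := min_le_right _ _
  set k : ℝ≥0 := ⟨(2 * (1 + 2 / μ ^ 2 + 16 / μ ^ 4))⁻¹, by positivity⟩
  have hk : 0 < k := by
    rw [← NNReal.coe_pos]; show (0 : ℝ) < (2 * (1 + 2 / μ ^ 2 + 16 / μ ^ 4))⁻¹; positivity
  have hD : ∀ s : ℂ, μ ≤ ‖s‖ →
      ∀ v ∈ closedBall (0 : ℂ²) (min (μ ^ 2 / 20) 1), k * ‖v‖ ^ (3 + 1) ≤ D s v :=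
    fun s hs v hv ↦ by
      show (2 * (1 + 2 / μ ^ 2 + 16 / μ ^ 4))⁻¹ * _ ≤ _
      rw [inv_mul_le_iff₀ (by positivity)]
      exact norm_pow_four_le_D hμ hs ((mem_closedBall_zero_iff.1 hv).trans (min_le_left _ _))
  exact ⟨_, fun c s hs hsB ↦ ((vanishingLipschitz_N hR hsB).inv_smul hk
    (vanishingLipschitz_D hR hsB) (hD s hs) |>.const_smul (-c)).mono (by rw [nnnorm_neg])⟩

theorem continuousAt_V (c : ℂ) {s : ℂ} {v : ℂ²} (hD : D s v = 0 → v = 0) :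
    ContinuousAt (fun s ↦ V c s v) s := by
  by_cases hv : v = 0
  · subst hv
    have hV : (fun s ↦ V c s 0) = fun _ ↦ 0 := by
      ext s i; fin_cases i <;> simp [V, N]
    simpa [hV] using continuousAt_const
  have hD' : D s v ≠ 0 := fun h ↦ hv (hD h)
  unfold V D N d₁ d₂
  fun_prop (disch := exact hD')

theorem eq_zero_of_D_eq_zero {μ : ℝ} (hμ : 0 < μ) {s : ℂ} (hs : μ ≤ ‖s‖) {v : ℂ²}
    (hv : ‖v‖ ≤ μ ^ 2 / 20) (hD : D s v = 0) : v = 0 := by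
  have := norm_pow_four_le_D hμ hs hv
  rw [hD, mul_zero] at this
  exact norm_eq_zero.1 (pow_eq_zero_iff (n := 4) (by norm_num) |>.1
    (le_antisymm this (by positivity)))

theorem exists_biLipschitz_f_eq {t₀ : ℂ} (ht₀ : t₀ ≠ 0) : ∃ ε > 0, ∀ t : ℂ, ‖t - t₀‖ < ε →
    ∃ r > 0, ∃ L ≥ 1, ∃ φ : ℂ² → ℂ², φ 0 = 0 ∧
      (∀ x ∈ closedBall (0 : ℂ²) r, ∀ y ∈ closedBall (0 : ℂ²) r,
        dist (φ x) (φ y) ≤ L * dist x y ∧ dist x y ≤ L * dist (φ x) (φ y)) ∧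
      ∀ x ∈ closedBall (0 : ℂ²) r, f t (φ x) = f t₀ x := by
  have hμ : 0 < ‖t₀‖ / 2 := by have := norm_pos_iff.2 ht₀; positivity
  set R := min ((‖t₀‖ / 2) ^ 2 / 20) 1
  obtain ⟨K, hK⟩ := vanishingLipschitz_V hμ (2 * ‖t₀‖₊)
  refine ⟨min (‖t₀‖ / 2) (1 / (2 * K + 1)), by positivity, fun t ht ↦ ?_⟩
  set c := t - t₀
  have hcK : ‖c‖₊ * K ≤ 1 / 2 := by
    have h := ht.trans_le (min_le_right _ _)
    rw [lt_div_iff₀ (by positivity)] at h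
    rw [← NNReal.coe_le_coe]; push_cast
    nlinarith [norm_nonneg c]
  have hs (τ : ℝ) (hτ : τ ∈ Icc (0 : ℝ) 1) := norm_add_ofReal_mul_bounds
    (ht.le.trans (min_le_left _ _)) hτ
  have hV : ∀ τ ∈ Icc (0 : ℝ) 1, VanishingLipschitz 0 (‖c‖₊ * K) R (V c (t₀ + τ * c)) :=
    fun τ hτ ↦ hK c _ (hs τ hτ).1 (by push_cast; exact (hs τ hτ).2)
  have hD : ∀ τ ∈ Icc (0 : ℝ) 1, ∀ x ∈ closedBall (0 : ℂ²) R, D (t₀ + τ * c) x = 0 → x = 0 :=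
    fun τ hτ x hx ↦ eq_zero_of_D_eq_zero hμ (hs τ hτ).1
      ((mem_closedBall_zero_iff.1 hx).trans (min_le_left _ _))
  obtain ⟨φ, hφ0, hφ, hγ⟩ := exists_biLipschitz_timeOne_map (by positivity) hcK
    (fun τ hτ ↦ (hV τ hτ).lipschitzOnWith)
    (fun x hx τ hτ ↦ ((continuousAt_V c (hD τ hτ x hx)).comp (f := fun τ : ℝ ↦ t₀ + τ * c)
      (by fun_prop)).continuousWithinAt)
    (fun τ hτ ↦ (hV τ hτ).1)
  refine ⟨R / 3, by positivity, _, Real.one_le_exp (by positivity), φ, hφ0, hφ, fun x hx ↦ ?_⟩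
  obtain ⟨γ, hγ0, hγ1, hγ, hγR⟩ := hγ x hx
  rw [← hγ1, ← hγ0, show t = t₀ + c by ring]
  exact f_eq_of_isIntegralCurveOn hγ fun τ hτ ↦ hD τ hτ _ (hγR τ hτ)

end T245

end

/-- The family `T₂,₄,₅ : f_t(x,y) = x⁴ + y⁵ + t·x²y²` (t ≠ 0) is bi-Lipschitz trivial. -/
theorem T245_biLipschitz_trivial
    (f : ℂ → EuclideanSpace ℂ (Fin 2) → ℂ)
    (hf : ∀ t : ℂ, ∀ v : EuclideanSpace ℂ (Fin 2),
      f t v = (v 0) ^ 4 + (v 1) ^ 5 + t * (v 0) ^ 2 * (v 1) ^ 2) :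
    ∀ t₀ : ℂ, t₀ ≠ 0 → ∃ T ∈ nhds t₀, (0 : ℂ) ∉ T ∧ ∀ t ∈ T,
      ∃ r : ℝ, 0 < r ∧ ∃ L : ℝ, 1 ≤ L ∧
        ∃ φ : EuclideanSpace ℂ (Fin 2) → EuclideanSpace ℂ (Fin 2),
          φ 0 = 0 ∧
          (∀ x ∈ ball (0 : EuclideanSpace ℂ (Fin 2)) r,
            ∀ y ∈ ball (0 : EuclideanSpace ℂ (Fin 2)) r,
              (1 / L) * ‖x - y‖ ≤ ‖φ x - φ y‖ ∧ ‖φ x - φ y‖ ≤ L * ‖x - y‖) ∧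
          ∀ x ∈ ball (0 : EuclideanSpace ℂ (Fin 2)) r, f t (φ x) = f t₀ x := by
  obtain rfl : f = T245.f := funext fun t ↦ funext (hf t)
  intro t₀ ht₀
  obtain ⟨ε, hε, hφ⟩ := T245.exists_biLipschitz_f_eq ht₀
  refine ⟨ball t₀ (min ε ‖t₀‖), ball_mem_nhds _ (by positivity), fun h0 ↦ ?_, fun t ht ↦ ?_⟩
  · rw [mem_ball, dist_zero_left] at h0
    exact (min_le_right _ _).not_gt h0
  rw [mem_ball, dist_eq_norm] at ht
  obtain ⟨r, hr, L, hL, φ, hφ0, hφL, hφf⟩ := hφ t (ht.trans_le (min_le_left _ _))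
  refine ⟨r, hr, L, hL, φ, hφ0, fun x hx y hy ↦ ?_, fun x hx ↦ hφf x (ball_subset_closedBall hx)⟩
  obtain ⟨hupper, hlower⟩ := hφL x (ball_subset_closedBall hx) y (ball_subset_closedBall hy)
  rw [dist_eq_norm, dist_eq_norm] at hupper hlower
  exact ⟨by rwa [one_div, inv_mul_le_iff₀ (by positivity)], hupper⟩
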